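/- With notation as above (frame {ψ_j} for S with bounds c₁, c₂, closed subspace T with cos(θ_{T,S}) > 0, consistent reconstruction F : H₀ = T ⊕ S⊥ → T defined by ⟨F(f), ψ_j⟩ = ⟨f, ψ_j⟩ for all j), the condition number κ(F) = sup_{f∈H₀, f̂≠0} ‖F(f)‖/‖f̂‖_{ℓ²} satisfies sec(θ_{T,S})/√c₂ ≤ κ(F) ≤ sec(θ_{T,S})/√c₁, where f̂ = (⟨f,ψ_j⟩)_j ∈ ℓ². -/

import Mathlib

open Submodule

variable {H : Type*}

/-- The cosine of the subspace angle `θ_{U,W}` between subspaces `U` and `W`: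
`cos θ_{U,W} = inf_{u ∈ U, ‖u‖ = 1} ‖Q_W u‖`. -/
noncomputable def cosAngle [NormedAddCommGroup H] [InnerProductSpace ℂ H]
    (U W : Submodule ℂ H) [HasOrthogonalProjection W] : ℝ :=
  sInf {r : ℝ | ∃ u ∈ U, ‖u‖ = 1 ∧ r = ‖(orthogonalProjection W u : H)‖}

open scoped InnerProductSpace

/-!
Since every `ψ j` lies in `S`, the samples of `g` are those of `P_S g`, so the frame
bounds read `c₁ ‖P_S g‖² ≤ ‖ĝ‖² ≤ c₂ ‖P_S g‖²` for every `g`, and on `T` moreover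
`cos θ_{T,S} ‖g‖ ≤ ‖P_S g‖`. Hence samples determine elements of `T`, so `F` fixes `T`.
Upper bound: `F f ∈ T` has the samples of `f`, so `‖f̂‖² ≥ c₁ cos² θ ‖F f‖²`.
Lower bound: a unit vector `u ∈ T` gives `κ ≥ 1/‖û‖ ≥ 1/(√c₂ ‖P_S u‖)`, and the infimum of
`‖P_S u‖` over such `u` is `cos θ_{T,S}`.
-/

section CosAngle

variable [NormedAddCommGroup H] [InnerProductSpace ℂ H] {U W : Submodule ℂ H}
  [HasOrthogonalProjection W]

lemma cosAngle_eq_sInf :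
    cosAngle U W = sInf {r : ℝ | ∃ u ∈ U, ‖u‖ = 1 ∧ r = ‖W.starProjection u‖} :=
  rfl

lemma cosAngle_nonneg : 0 ≤ cosAngle U W :=
  Real.sInf_nonneg <| by rintro _ ⟨u, -, -, rfl⟩; positivity

lemma cosAngle_le_norm_starProjection {u : H} (hu : u ∈ U) (hu1 : ‖u‖ = 1) :
    cosAngle U W ≤ ‖W.starProjection u‖ :=
  csInf_le ⟨0, by rintro _ ⟨v, -, -, rfl⟩; positivity⟩ ⟨u, hu, hu1, rfl⟩

lemma cosAngle_mul_norm_le {g : H} (hg : g ∈ U) :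
    cosAngle U W * ‖g‖ ≤ ‖W.starProjection g‖ := by
  rcases eq_or_ne g 0 with rfl | hg0
  · simp
  have hle := cosAngle_le_norm_starProjection (W := W) (U.smul_mem (‖g‖⁻¹ : ℂ) hg)
    (norm_smul_inv_norm hg0)
  rw [map_smul, norm_smul, ← Complex.ofReal_inv, Complex.norm_real, Real.norm_eq_abs,
    abs_inv, abs_norm, inv_mul_eq_div, le_div_iff₀ (norm_pos_iff.mpr hg0)] at hle
  exact hle

lemma exists_norm_eq_one_of_cosAngle_pos (h : 0 < cosAngle U W) : ∃ u ∈ U, ‖u‖ = 1 := by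
  by_contra! hempty
  have hA : {r : ℝ | ∃ u ∈ U, ‖u‖ = 1 ∧ r = ‖W.starProjection u‖} = ∅ :=
    Set.eq_empty_of_forall_notMem fun _ ⟨u, hu, hu1, _⟩ => hempty u hu hu1
  rw [cosAngle_eq_sInf, hA, Real.sInf_empty] at h
  exact h.false

lemma inv_cosAngle_le {b : ℝ} (h : 0 < cosAngle U W)
    (hb : ∀ u ∈ U, ‖u‖ = 1 → ‖W.starProjection u‖⁻¹ ≤ b) : (cosAngle U W)⁻¹ ≤ b := by
  obtain ⟨u₀, hu₀, hu₀1⟩ := exists_norm_eq_one_of_cosAngle_pos h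
  have hpos : ∀ u ∈ U, ‖u‖ = 1 → 0 < ‖W.starProjection u‖ := fun u hu hu1 =>
    h.trans_le (cosAngle_le_norm_starProjection hu hu1)
  have hb_pos : 0 < b := (inv_pos.mpr (hpos u₀ hu₀ hu₀1)).trans_le (hb u₀ hu₀ hu₀1)
  refine inv_le_of_inv_le₀ hb_pos (le_csInf ⟨_, u₀, hu₀, hu₀1, rfl⟩ ?_)
  rintro _ ⟨u, hu, hu1, rfl⟩
  exact inv_le_of_inv_le₀ (hpos u hu hu1) (hb u hu hu1)

end CosAngle

/-- `‖f̂‖²` in the notation of the statement. -/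
noncomputable def sampleNormSq [NormedAddCommGroup H] [InnerProductSpace ℂ H]
    (ψ : ℕ → H) (f : H) : ℝ :=
  ∑' j, ‖⟪ψ j, f⟫_ℂ‖ ^ 2

section Sampling

variable [NormedAddCommGroup H] [InnerProductSpace ℂ H] {S T : Submodule ℂ H}
  [HasOrthogonalProjection S] {ψ : ℕ → H} {c₁ c₂ : ℝ}

lemma sampleNormSq_congr {f g : H} (h : ∀ j, ⟪ψ j, f⟫_ℂ = ⟪ψ j, g⟫_ℂ) :
    sampleNormSq ψ f = sampleNormSq ψ g :=
  tsum_congr fun j => by rw [h j]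

lemma sampleNormSq_starProjection (hmem : ∀ j, ψ j ∈ S) (g : H) :
    sampleNormSq ψ (S.starProjection g) = sampleNormSq ψ g :=
  sampleNormSq_congr fun j =>
    inner_orthogonalProjectionOnto_eq_of_mem_left (⟨ψ j, hmem j⟩ : S) g

lemma sqrt_sampleNormSq_le (hmem : ∀ j, ψ j ∈ S)
    (hup : ∀ f ∈ S, sampleNormSq ψ f ≤ c₂ * ‖f‖ ^ 2) (g : H) :
    √(sampleNormSq ψ g) ≤ √c₂ * ‖S.starProjection g‖ := by
  rw [← Real.sqrt_sq (norm_nonneg (S.starProjection g)), ← Real.sqrt_mul']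
  · refine Real.sqrt_le_sqrt ?_
    rw [← sampleNormSq_starProjection hmem]
    exact hup _ (S.starProjection_apply_mem g)
  · positivity

lemma norm_div_norm_starProjection_le (hmem : ∀ j, ψ j ∈ S)
    (hup : ∀ f ∈ S, sampleNormSq ψ f ≤ c₂ * ‖f‖ ^ 2) (hc₂ : 0 < c₂) {g : H}
    (hs : 0 < sampleNormSq ψ g) :
    ‖g‖ / ‖S.starProjection g‖ ≤ √c₂ * (‖g‖ / √(sampleNormSq ψ g)) := by
  have hsqrt := sqrt_sampleNormSq_le hmem hup g
  have hs' : 0 < √(sampleNormSq ψ g) := Real.sqrt_pos.mpr hs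
  calc ‖g‖ / ‖S.starProjection g‖ = √c₂ * ‖g‖ / (√c₂ * ‖S.starProjection g‖) := by
        rw [mul_div_mul_left _ _ (Real.sqrt_pos.mpr hc₂).ne']
    _ ≤ √c₂ * ‖g‖ / √(sampleNormSq ψ g) := by gcongr
    _ = √c₂ * (‖g‖ / √(sampleNormSq ψ g)) := mul_div_assoc _ _ _

lemma mul_sq_cosAngle_mul_norm_le_sampleNormSq (hmem : ∀ j, ψ j ∈ S) (hc₁ : 0 ≤ c₁)
    (hlow : ∀ f ∈ S, c₁ * ‖f‖ ^ 2 ≤ sampleNormSq ψ f) {g : H} (hg : g ∈ T) :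
    c₁ * (cosAngle T S * ‖g‖) ^ 2 ≤ sampleNormSq ψ g := by
  have hproj : (cosAngle T S * ‖g‖) ^ 2 ≤ ‖S.starProjection g‖ ^ 2 :=
    pow_le_pow_left₀ (mul_nonneg cosAngle_nonneg (norm_nonneg g)) (cosAngle_mul_norm_le hg) 2
  calc c₁ * (cosAngle T S * ‖g‖) ^ 2 ≤ c₁ * ‖S.starProjection g‖ ^ 2 :=
        mul_le_mul_of_nonneg_left hproj hc₁
    _ ≤ sampleNormSq ψ (S.starProjection g) := hlow _ (S.starProjection_apply_mem g)
    _ = sampleNormSq ψ g := sampleNormSq_starProjection hmem g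

variable (hmem : ∀ j, ψ j ∈ S) (hc₁ : 0 < c₁)
  (hlow : ∀ f ∈ S, c₁ * ‖f‖ ^ 2 ≤ sampleNormSq ψ f) (hangle : 0 < cosAngle T S)
include hmem hc₁ hlow hangle

lemma eq_of_mem_of_forall_inner_eq {x y : H} (hx : x ∈ T) (hy : y ∈ T)
    (h : ∀ j, ⟪ψ j, x⟫_ℂ = ⟪ψ j, y⟫_ℂ) : x = y := by
  have hzero : sampleNormSq ψ (x - y) = 0 := by
    simp [sampleNormSq, h]
  have hle := mul_sq_cosAngle_mul_norm_le_sampleNormSq hmem hc₁.le hlow (T.sub_mem hx hy)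
  rw [hzero] at hle
  by_contra hne
  have hd := norm_pos_iff.mpr (sub_ne_zero.mpr hne)
  have : 0 < c₁ * (cosAngle T S * ‖x - y‖) ^ 2 := by positivity
  linarith

lemma norm_div_sqrt_sampleNormSq_le {g : H} (hg : g ∈ T) :
    ‖g‖ / √(sampleNormSq ψ g) ≤ (cosAngle T S)⁻¹ / √c₁ := by
  rcases eq_or_ne g 0 with rfl | hg0
  · simp only [norm_zero, zero_div]; positivity
  have hsqrt : √c₁ * (cosAngle T S * ‖g‖) ≤ √(sampleNormSq ψ g) := by
    rw [← Real.sqrt_sq (by positivity : 0 ≤ cosAngle T S * ‖g‖), ← Real.sqrt_mul hc₁.le]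
    exact Real.sqrt_le_sqrt (mul_sq_cosAngle_mul_norm_le_sampleNormSq hmem hc₁.le hlow hg)
  have hpos : 0 < √c₁ * (cosAngle T S * ‖g‖) := by
    have := norm_pos_iff.mpr hg0
    positivity
  rw [div_le_div_iff₀ (hpos.trans_le hsqrt) (Real.sqrt_pos.mpr hc₁)]
  calc ‖g‖ * √c₁ = (cosAngle T S)⁻¹ * (√c₁ * (cosAngle T S * ‖g‖)) := by
        field_simp
    _ ≤ (cosAngle T S)⁻¹ * √(sampleNormSq ψ g) := by gcongr

end Sampling

theorem stmt6_general [NormedAddCommGroup H] [InnerProductSpace ℂ H]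
    (S T : Submodule ℂ H)
    [HasOrthogonalProjection S]
    (ψ : ℕ → H) (hmem : ∀ j, ψ j ∈ S)
    (c₁ c₂ : ℝ) (hc₁ : 0 < c₁) (hc₁₂ : c₁ ≤ c₂)
    (hframe : ∀ f ∈ S, c₁ * ‖f‖ ^ 2 ≤ ∑' j, ‖⟪ψ j, f⟫_ℂ‖ ^ 2 ∧
      ∑' j, ‖⟪ψ j, f⟫_ℂ‖ ^ 2 ≤ c₂ * ‖f‖ ^ 2)
    (hangle : 0 < cosAngle T S)
    (F : H → H)
    (hF : ∀ f ∈ T ⊔ Sᗮ, F f ∈ T ∧ ∀ j, ⟪ψ j, F f⟫_ℂ = ⟪ψ j, f⟫_ℂ)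
    (κ : ℝ)
    (hκ : IsLUB {r : ℝ | ∃ f ∈ T ⊔ Sᗮ, (∑' j, ‖⟪ψ j, f⟫_ℂ‖ ^ 2) ≠ 0 ∧
      r = ‖F f‖ / Real.sqrt (∑' j, ‖⟪ψ j, f⟫_ℂ‖ ^ 2)} κ) :
    (cosAngle T S)⁻¹ / Real.sqrt c₂ ≤ κ ∧ κ ≤ (cosAngle T S)⁻¹ / Real.sqrt c₁ := by
  have hlow : ∀ f ∈ S, c₁ * ‖f‖ ^ 2 ≤ sampleNormSq ψ f := fun f hf => (hframe f hf).1
  have hFT : ∀ u ∈ T, F u = u := fun u hu =>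
    let hFu := hF u (mem_sup_left hu)
    eq_of_mem_of_forall_inner_eq hmem hc₁ hlow hangle hFu.1 hu hFu.2
  constructor
  · have hsqrt_c₂ : 0 < √c₂ := Real.sqrt_pos.mpr (hc₁.trans_le hc₁₂)
    rw [div_le_iff₀ hsqrt_c₂]
    refine inv_cosAngle_le hangle fun u hu hu1 => ?_
    have hs : 0 < sampleNormSq ψ u := by
      have := mul_sq_cosAngle_mul_norm_le_sampleNormSq hmem hc₁.le hlow hu
      rw [hu1, mul_one] at this
      exact lt_of_lt_of_le (by positivity) this
    have hκu : ‖u‖ / √(sampleNormSq ψ u) ≤ κ :=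
      hκ.1 ⟨u, mem_sup_left hu, hs.ne', by rw [hFT u hu]; rfl⟩
    calc ‖S.starProjection u‖⁻¹ = ‖u‖ / ‖S.starProjection u‖ := by rw [hu1, one_div]
      _ ≤ √c₂ * (‖u‖ / √(sampleNormSq ψ u)) :=
        norm_div_norm_starProjection_le hmem (fun f hf => (hframe f hf).2) (hc₁.trans_le hc₁₂) hs
      _ ≤ κ * √c₂ := by rw [mul_comm κ]; gcongr
  · refine hκ.2 ?_
    rintro _ ⟨f, hf, -, rfl⟩
    obtain ⟨hFf, hsamples⟩ := hF f hf
    change ‖F f‖ / √(sampleNormSq ψ f) ≤ _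
    rw [← sampleNormSq_congr hsamples]
    exact norm_div_sqrt_sampleNormSq_le hmem hc₁ hlow hangle hFf

/-- the condition number `κ(F) = sup_{f ∈ H₀, f̂ ≠ 0} ‖F(f)‖/‖f̂‖_{ℓ²}` of the
consistent reconstruction `F : H₀ = T ⊕ Sᗮ → T` (defined by `⟨F(f),ψ_j⟩ = ⟨f,ψ_j⟩` for all `j`)
satisfies `sec θ_{T,S}/√c₂ ≤ κ(F) ≤ sec θ_{T,S}/√c₁`. -/
theorem stmt6 [NormedAddCommGroup H] [InnerProductSpace ℂ H] [CompleteSpace H]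
    [TopologicalSpace.SeparableSpace H]
    (S T : Submodule ℂ H) (hS : IsClosed (S : Set H)) (hT : IsClosed (T : Set H))
    [HasOrthogonalProjection S]
    (ψ : ℕ → H) (hmem : ∀ j, ψ j ∈ S)
    (c₁ c₂ : ℝ) (hc₁ : 0 < c₁) (hc₁₂ : c₁ ≤ c₂)
    (hframe : ∀ f ∈ S, c₁ * ‖f‖ ^ 2 ≤ ∑' j, ‖⟪ψ j, f⟫_ℂ‖ ^ 2 ∧
      ∑' j, ‖⟪ψ j, f⟫_ℂ‖ ^ 2 ≤ c₂ * ‖f‖ ^ 2)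
    (hangle : 0 < cosAngle T S)
    (F : H → H)
    (hF : ∀ f ∈ T ⊔ Sᗮ, F f ∈ T ∧ ∀ j, ⟪ψ j, F f⟫_ℂ = ⟪ψ j, f⟫_ℂ)
    (κ : ℝ)
    (hκ : IsLUB {r : ℝ | ∃ f ∈ T ⊔ Sᗮ, (∑' j, ‖⟪ψ j, f⟫_ℂ‖ ^ 2) ≠ 0 ∧
      r = ‖F f‖ / Real.sqrt (∑' j, ‖⟪ψ j, f⟫_ℂ‖ ^ 2)} κ) :
    (cosAngle T S)⁻¹ / Real.sqrt c₂ ≤ κ ∧ κ ≤ (cosAngle T S)⁻¹ / Real.sqrt c₁ :=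
  stmt6_general S T ψ hmem c₁ c₂ hc₁ hc₁₂ hframe hangle F hF κ hκ
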